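/- Let T > 0, let α : ℝ × ℝ × ℝ → ℝ be a C² function (arguments (x,τ,φ)), and let V : ℝ × ℝ → ℝ be a C³ function such that ∂_xV(x,t) > 0 for all (x,t). Define φ(x,τ) := −∂²_xV(x,T−τ)/∂_xV(x,T−τ), and assume φ is C² in x and C¹ in τ. If V satisfies ∂_tV(x,t) − α(x, T−t, φ(x, T−t))·∂_xV(x,t) = 0 for all x ∈ ℝ and t ∈ [0,T], then φ satisfies the quasilinear parabolic equation ∂_τφ(x,τ) − ∂²_x[ α(x,τ,φ(x,τ)) ] = −∂_x[ α(x,τ,φ(x,τ))·φ(x,τ) ] for all x ∈ ℝ and τ ∈ (0,T). -/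

import Mathlib

/-!
The Riccati transform is a logarithmic derivative: with `u := ∂ₓV > 0` we have
`φ(·, τ) = -∂ₓ log u(·, T - τ)`. Write `a(x) := α(x, τ, φ(x, τ))`. Differentiating `∂ₜV = a ∂ₓV`
in `x` and commuting `∂ₜ∂ₓV = ∂ₓ∂ₜV` gives `∂ₜ log u = ∂ₓ(a u) / u = ∂ₓa - a φ` at `t = T - τ`.
Since `∂_τ φ = ∂ₜ∂ₓ log u = ∂ₓ∂ₜ log u`, the equation for `φ` is `∂ₓ` of this identity.
-/

open Set Function

section PartialDerivatives

variable {𝕜 E : Type*} [NontriviallyNormedField 𝕜] [NormedAddCommGroup E] [NormedSpace 𝕜 E]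
  {f : 𝕜 × 𝕜 → E} {x t : 𝕜}

theorem DifferentiableAt.hasDerivAt_fst_slice (hf : DifferentiableAt 𝕜 f (x, t)) :
    HasDerivAt (fun y => f (y, t)) (fderiv 𝕜 f (x, t) (1, 0)) x :=
  hf.hasFDerivAt.comp_hasDerivAt x ((hasDerivAt_id x).prodMk (hasDerivAt_const x t))

theorem DifferentiableAt.hasDerivAt_snd_slice (hf : DifferentiableAt 𝕜 f (x, t)) :
    HasDerivAt (fun s => f (x, s)) (fderiv 𝕜 f (x, t) (0, 1)) t :=
  hf.hasFDerivAt.comp_hasDerivAt t ((hasDerivAt_const t x).prodMk (hasDerivAt_id t))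

theorem ContDiff.uncurry_deriv_fst {g : 𝕜 → 𝕜 → E} {n : WithTop ℕ∞}
    (hg : ContDiff 𝕜 (n + 1) (uncurry g)) :
    ContDiff 𝕜 n (uncurry fun y t => deriv (fun z => g z t) y) := by
  have hd : Differentiable 𝕜 (uncurry g) := hg.differentiable (by simp)
  have : uncurry (fun y t => deriv (fun z => g z t) y) = fun p => fderiv 𝕜 (uncurry g) p (1, 0) :=
    funext fun p => (hd p).hasDerivAt_fst_slice.deriv
  rw [this]
  exact (hg.fderiv_right le_rfl).clm_apply contDiff_const

theorem ContDiff.deriv_deriv_comm {𝕜 : Type*} [RCLike 𝕜] [NormedSpace 𝕜 E] {g : 𝕜 → 𝕜 → E}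
    (hg : ContDiff 𝕜 2 (uncurry g)) (x t : 𝕜) :
    deriv (fun s => deriv (fun y => g y s) x) t = deriv (fun y => deriv (fun s => g y s) t) x := by
  set f := uncurry g
  have hd : Differentiable 𝕜 f := hg.differentiable (by norm_num)
  have hd' : Differentiable 𝕜 (fderiv 𝕜 f) :=
    (hg.fderiv_right (m := 1) (by norm_num)).differentiable (by norm_num)
  have hfst : (fun s => deriv (fun y => g y s) x) = fun s => fderiv 𝕜 f (x, s) (1, 0) :=
    funext fun s => (hd (x, s)).hasDerivAt_fst_slice.deriv
  have hsnd : (fun y => deriv (fun s => g y s) t) = fun y => fderiv 𝕜 f (y, t) (0, 1) :=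
    funext fun y => (hd (y, t)).hasDerivAt_snd_slice.deriv
  have h1 : HasDerivAt (fun s => fderiv 𝕜 f (x, s) (1, 0))
      (fderiv 𝕜 (fderiv 𝕜 f) (x, t) (0, 1) (1, 0)) t := by
    simpa using (hd' (x, t)).hasDerivAt_snd_slice.clm_apply (hasDerivAt_const t ((1 : 𝕜), (0 : 𝕜)))
  have h2 : HasDerivAt (fun y => fderiv 𝕜 f (y, t) (0, 1))
      (fderiv 𝕜 (fderiv 𝕜 f) (x, t) (1, 0) (0, 1)) x := by
    simpa using (hd' (x, t)).hasDerivAt_fst_slice.clm_apply (hasDerivAt_const x ((0 : 𝕜), (1 : 𝕜)))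
  rw [hfst, hsnd, h1.deriv, h2.deriv]
  exact hg.contDiffAt.isSymmSndFDerivAt (by simp) _ _

end PartialDerivatives

theorem ContDiff.deriv_logDeriv_comm {u : ℝ → ℝ → ℝ} (hu : ContDiff ℝ 2 (uncurry u))
    (hpos : ∀ x t, 0 < u x t) (x t : ℝ) :
    deriv (fun s => deriv (fun y => u y s) x / u x s) t =
      deriv (fun y => deriv (fun s => u y s) t / u y t) x := by
  have hd : Differentiable ℝ (uncurry u) := hu.differentiable (by norm_num)
  have hfst : (fun s => deriv (fun y => u y s) x / u x s) =
      fun s => deriv (fun y => Real.log (u y s)) x :=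
    funext fun s =>
      (deriv.log (hd (x, s)).hasDerivAt_fst_slice.differentiableAt (hpos x s).ne').symm
  have hsnd : (fun y => deriv (fun s => u y s) t / u y t) =
      fun y => deriv (fun s => Real.log (u y s)) t :=
    funext fun y =>
      (deriv.log (hd (y, t)).hasDerivAt_snd_slice.differentiableAt (hpos y t).ne').symm
  rw [hfst, hsnd]
  exact (hu.log fun p => (hpos p.1 p.2).ne').deriv_deriv_comm x t

theorem stmt10_general (T : ℝ)
    (α : ℝ → ℝ → ℝ → ℝ)
    (hα : ContDiff ℝ 2 (fun p : ℝ × ℝ × ℝ => α p.1 p.2.1 p.2.2))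
    (V : ℝ → ℝ → ℝ)
    (hV : ContDiff ℝ 3 (fun p : ℝ × ℝ => V p.1 p.2))
    (hVx : ∀ x t : ℝ, 0 < deriv (fun y => V y t) x)
    (φ : ℝ → ℝ → ℝ)
    (hφ : ∀ x τ : ℝ, φ x τ =
      -(deriv (fun y => deriv (fun z => V z (T - τ)) y) x) / deriv (fun y => V y (T - τ)) x)
    (hφx : ∀ τ : ℝ, ContDiff ℝ 2 (fun x => φ x τ))
    (hPDE : ∀ x t : ℝ, t ∈ Icc (0 : ℝ) T →
      deriv (fun s => V x s) t - α x (T - t) (φ x (T - t)) * deriv (fun y => V y t) x = 0) :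
    ∀ x τ : ℝ, τ ∈ Ioo (0 : ℝ) T →
      deriv (fun s => φ x s) τ - deriv (fun y => deriv (fun z => α z τ (φ z τ)) y) x =
        -deriv (fun y => α y τ (φ y τ) * φ y τ) x := by
  intro x τ hτ
  set a : ℝ → ℝ := fun y => α y τ (φ y τ)
  set u : ℝ → ℝ → ℝ := fun y t => deriv (fun z => V z t) y
  have hu : ContDiff ℝ 2 (uncurry u) := ContDiff.uncurry_deriv_fst (n := 2) hV
  have ha : ContDiff ℝ 2 a := hα.comp (contDiff_id.prodMk (contDiff_const.prodMk (hφx τ)))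
  have hφu : ∀ y s, φ y s = -(deriv (fun z => u z (T - s)) y / u y (T - s)) := fun y s => by
    rw [hφ, neg_div]
  have hut : ∀ y, deriv (fun s => u y s) (T - τ) / u y (T - τ) = deriv a y - a y * φ y τ := by
    intro y
    have hVt : (fun z => deriv (fun s => V z s) (T - τ)) = fun z => a z * u z (T - τ) := by
      funext z
      have := hPDE z (T - τ) ⟨by linarith [hτ.2], by linarith [hτ.1]⟩
      rw [sub_sub_cancel] at this
      linarith
    have hux : DifferentiableAt ℝ (fun z => u z (T - τ)) y :=
      ((hu.differentiable (by norm_num)) (y, T - τ)).hasDerivAt_fst_slice.differentiableAt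
    rw [ContDiff.deriv_deriv_comm (hV.of_le (by norm_num)), hVt,
      deriv_fun_mul ((ha.differentiable (by norm_num)) y) hux, hφu y τ]
    have hu0 : u y (T - τ) ≠ 0 := (hVx y (T - τ)).ne'
    field_simp
    ring
  set ψ := fun s => deriv (fun z => u z s) x / u x s
  have hφψ : (fun s => φ x s) = fun s => -ψ (T - s) := funext fun s => hφu x s
  have ha' : Differentiable ℝ (deriv a) :=
    (ContDiff.deriv' (n := 1) ha).differentiable (by norm_num)
  have haφ : Differentiable ℝ (fun y => a y * φ y τ) :=
    (ha.mul (hφx τ)).differentiable (by norm_num)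
  calc deriv (fun s => φ x s) τ - deriv (deriv a) x
      = deriv (fun y => deriv (fun s => u y s) (T - τ) / u y (T - τ)) x - deriv (deriv a) x := by
        rw [hφψ, deriv.fun_neg, deriv_comp_const_sub, neg_neg, hu.deriv_logDeriv_comm hVx]
    _ = -deriv (fun y => a y * φ y τ) x := by
        rw [funext hut, deriv_fun_sub (ha' x) (haφ x)]
        ring

/-- Riccati transformation. If `V` is `C³` with `∂ₓV > 0`, `α` is `C²`,
`φ(x,τ) := −∂²ₓV(x,T−τ)/∂ₓV(x,T−τ)` (assumed `C²` in `x` and `C¹` in `τ`), and `V` solves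
`∂ₜV − α(x,T−t,φ(x,T−t))∂ₓV = 0`, then `φ` solves
`∂_τφ − ∂²ₓ[α(x,τ,φ(x,τ))] = −∂ₓ[α(x,τ,φ(x,τ))φ(x,τ)]` on `ℝ × (0,T)`. -/
theorem stmt10 (T : ℝ) (hT : 0 < T)
    (α : ℝ → ℝ → ℝ → ℝ)
    (hα : ContDiff ℝ 2 (fun p : ℝ × ℝ × ℝ => α p.1 p.2.1 p.2.2))
    (V : ℝ → ℝ → ℝ)
    (hV : ContDiff ℝ 3 (fun p : ℝ × ℝ => V p.1 p.2))
    (hVx : ∀ x t : ℝ, 0 < deriv (fun y => V y t) x)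
    (φ : ℝ → ℝ → ℝ)
    (hφ : ∀ x τ : ℝ, φ x τ =
      -(deriv (fun y => deriv (fun z => V z (T - τ)) y) x) / deriv (fun y => V y (T - τ)) x)
    (hφx : ∀ τ : ℝ, ContDiff ℝ 2 (fun x => φ x τ))
    (hφτ : ∀ x : ℝ, ContDiff ℝ 1 (fun τ => φ x τ))
    (hPDE : ∀ x t : ℝ, t ∈ Icc (0 : ℝ) T →
      deriv (fun s => V x s) t - α x (T - t) (φ x (T - t)) * deriv (fun y => V y t) x = 0) :
    ∀ x τ : ℝ, τ ∈ Ioo (0 : ℝ) T →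
      deriv (fun s => φ x s) τ - deriv (fun y => deriv (fun z => α z τ (φ z τ)) y) x =
        -deriv (fun y => α y τ (φ y τ) * φ y τ) x :=
  stmt10_general T α hα V hV hVx φ hφ hφx hPDE
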